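/- Let n ≥ 1 be an integer and let T₀ = conv{ρ₀, ρ_u, ρ_v} and T₁ = conv{ρ₁, ρ_u, ρ_v} be two adjacent A_n-triangles in ℤ³, and let w₀, w₁ ∈ Hom(ℤ³, ℤ) be the unique linear forms taking the value 1 on the vertices of T₀ and of T₁ respectively. Then ⟨w₁, ρ₀⟩ = ⟨w₀, ρ₁⟩. In particular, the condition of almost-flatness is symmetric in T₀ and T₁. -/

import Mathlib

open Matrix

/-- The coordinatewise embedding `ℤ³ → ℝ³`. -/
def toR3 (v : Fin 3 → ℤ) : Fin 3 → ℝ := fun i => (v i : ℝ)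

/-- The lattice length of the segment between two lattice points `p, q ∈ ℤ³`:
the gcd of the coordinates of `q − p`. -/
def latticeLength (p q : Fin 3 → ℤ) : ℕ :=
  Int.gcd (q 0 - p 0) ((Int.gcd (q 1 - p 1) (q 2 - p 2) : ℕ) : ℤ)

/-- The relative interior of the triangle with vertices `a, b, c ∈ ℝ³`: points with all
barycentric coordinates (strictly) positive. -/
def relIntTriangle (a b c : Fin 3 → ℝ) : Set (Fin 3 → ℝ) :=
  {x | ∃ t₁ t₂ t₃ : ℝ, 0 < t₁ ∧ 0 < t₂ ∧ 0 < t₃ ∧ t₁ + t₂ + t₃ = 1 ∧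
    x = t₁ • a + t₂ • b + t₃ • c}

/-- An `Aₙ`-triangle in `ℤ³`: three affinely independent lattice points such that (1) the
relative interior of their convex hull contains no lattice point, (2) the edges have lattice
lengths `1`, `1`, `n+1`, (3) some linear form `w ∈ Hom(ℤ³, ℤ)` takes the value `1` on all
three vertices. -/
structure IsAnTriangle (n : ℕ) (v₁ v₂ v₃ : Fin 3 → ℤ) : Prop where
  affInd : AffineIndependent ℝ ![toR3 v₁, toR3 v₂, toR3 v₃]
  no_interior_point : ∀ p : Fin 3 → ℤ, toR3 p ∉ relIntTriangle (toR3 v₁) (toR3 v₂) (toR3 v₃)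
  edge_lengths : ({latticeLength v₁ v₂, latticeLength v₂ v₃, latticeLength v₁ v₃} : Multiset ℕ)
    = {1, 1, n + 1}
  height_one : ∃ w : Fin 3 → ℤ, w ⬝ᵥ v₁ = 1 ∧ w ⬝ᵥ v₂ = 1 ∧ w ⬝ᵥ v₃ = 1

/-- Two adjacent `Aₙ`-triangles `T₀ = conv{ρ₀, ρᵤ, ρᵥ}` and `T₁ = conv{ρ₁, ρᵤ, ρᵥ}` in `ℤ³`:
both are `Aₙ`-triangles, the common edge `conv{ρᵤ, ρᵥ}` is the edge of lattice length `n+1`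
of both, and `ρ₀`, `ρ₁` lie in the two different open half-spaces of `ℝ³` determined by the
plane spanned by `ρᵤ` and `ρᵥ`. -/
structure AreAdjacentAnTriangles (n : ℕ) (ρ₀ ρ₁ ρu ρv : Fin 3 → ℤ) : Prop where
  t₀ : IsAnTriangle n ρ₀ ρu ρv
  t₁ : IsAnTriangle n ρ₁ ρu ρv
  common_edge_length : latticeLength ρu ρv = n + 1
  opposite_sides : ∃ φ : (Fin 3 → ℝ) →ₗ[ℝ] ℝ,
    φ (toR3 ρu) = 0 ∧ φ (toR3 ρv) = 0 ∧ φ (toR3 ρ₀) < 0 ∧ 0 < φ (toR3 ρ₁)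

/-!
Write `ρv - ρu = (n + 1) • e` with `e` primitive and put `f = ρᵢ - ρu`. A lattice point
`β e + γ f` with `β, γ ∈ [0, 1)` is `0`: if one coefficient vanishes, primitivity of `e` or `f`
kills the other; otherwise the point or its reflection `e + f - (β e + γ f)`, translated by `ρu`,
lies in the open triangle `Tᵢ`, because `n ≥ 1`. Together with the height-one form this makes
`ρu, e, ρᵢ` a basis of `ℤ³` for `i = 0, 1`. In `ρ₁ = a ρu + b e + c ρ₀` the coefficient `c` is
therefore a unit, and the form separating `ρ₀` from `ρ₁` makes it `-1`. Hence
`ρ₀ + ρ₁ = a ρu + b e`, on which `w₀` and `w₁` agree, both being `1` on `ρu` and `0` on `e`.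
-/

def coordGcd (v : Fin 3 → ℤ) : ℕ := Int.gcd (v 0) (Int.gcd (v 1) (v 2))

lemma latticeLength_eq_coordGcd (p q : Fin 3 → ℤ) : latticeLength p q = coordGcd (q - p) := rfl

lemma coordGcd_neg (v : Fin 3 → ℤ) : coordGcd (-v) = coordGcd v := by
  simp [coordGcd]

lemma latticeLength_comm (p q : Fin 3 → ℤ) : latticeLength p q = latticeLength q p := by
  rw [latticeLength_eq_coordGcd, latticeLength_eq_coordGcd, ← neg_sub, coordGcd_neg]

lemma coordGcd_zsmul (k : ℤ) (v : Fin 3 → ℤ) : coordGcd (k • v) = k.natAbs * coordGcd v := by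
  simp [coordGcd, Int.gcd_def, Int.natAbs_mul, Int.natAbs_abs, Nat.gcd_mul_left]

lemma coordGcd_dvd (v : Fin 3 → ℤ) (i : Fin 3) : (coordGcd v : ℤ) ∣ v i := by
  fin_cases i
  · exact Int.gcd_dvd_left _ _
  · exact (Int.gcd_dvd_right _ _).trans (Int.gcd_dvd_left _ _)
  · exact (Int.gcd_dvd_right _ _).trans (Int.gcd_dvd_right _ _)

lemma exists_eq_coordGcd_zsmul (v : Fin 3 → ℤ) : ∃ e, v = (coordGcd v : ℤ) • e :=
  ⟨fun i => v i / coordGcd v, funext fun i => (Int.mul_ediv_cancel' (coordGcd_dvd v i)).symm⟩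

lemma exists_dotProduct_eq_coordGcd (v : Fin 3 → ℤ) : ∃ c : Fin 3 → ℤ, c ⬝ᵥ v = coordGcd v := by
  set g := Int.gcd (v 1) (v 2)
  refine ⟨![Int.gcdA (v 0) g, Int.gcdB (v 0) g * Int.gcdA (v 1) (v 2),
    Int.gcdB (v 0) g * Int.gcdB (v 1) (v 2)], ?_⟩
  have h₀ := Int.gcd_eq_gcd_ab (v 0) g
  have h₁ := Int.gcd_eq_gcd_ab (v 1) (v 2)
  simp [coordGcd, dotProduct, Fin.sum_univ_three]
  linear_combination -h₀ - Int.gcdB (v 0) g * h₁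

@[simp]
lemma toR3_add (v w : Fin 3 → ℤ) : toR3 (v + w) = toR3 v + toR3 w := by
  ext i; simp [toR3]

@[simp]
lemma toR3_sub (v w : Fin 3 → ℤ) : toR3 (v - w) = toR3 v - toR3 w := by
  ext i; simp [toR3]

@[simp]
lemma toR3_zsmul (k : ℤ) (v : Fin 3 → ℤ) : toR3 (k • v) = (k : ℝ) • toR3 v := by
  ext i; simp [toR3]

lemma toR3_injective : Function.Injective toR3 := fun _ _ h =>
  funext fun i => Int.cast_injective (congrFun h i)

@[simp]
lemma toR3_dotProduct_toR3 (v w : Fin 3 → ℤ) : toR3 v ⬝ᵥ toR3 w = (v ⬝ᵥ w : ℤ) := by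
  simp [toR3, dotProduct]

lemma eq_zero_of_toR3_eq_smul {v z : Fin 3 → ℤ} (hv : coordGcd v = 1) {t : ℝ} (h₀ : 0 ≤ t)
    (h₁ : t < 1) (hz : toR3 z = t • toR3 v) : t = 0 := by
  obtain ⟨c, hc⟩ := exists_dotProduct_eq_coordGcd v
  have ht : t = (c ⬝ᵥ z : ℤ) := by
    rw [← toR3_dotProduct_toR3, hz, dotProduct_smul, toR3_dotProduct_toR3, hc, hv]
    simp
  rw [ht] at h₀ h₁ ⊢
  have hcz : c ⬝ᵥ z = 0 := by
    have : (0 : ℤ) ≤ c ⬝ᵥ z ∧ c ⬝ᵥ z < 1 := ⟨by exact_mod_cast h₀, by exact_mod_cast h₁⟩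
    omega
  simp [hcz]

lemma map_toR3_eq_zero_of_sub_eq_zsmul {p q e : Fin 3 → ℤ} {k : ℤ} (φ : (Fin 3 → ℝ) →ₗ[ℝ] ℝ)
    (hk : k ≠ 0) (he : q - p = k • e) (h : φ (toR3 p) = φ (toR3 q)) : φ (toR3 e) = 0 := by
  have := congrArg (φ ∘ toR3) he
  simp only [Function.comp_apply, toR3_sub, toR3_zsmul, map_sub, map_smul, h, sub_self] at this
  exact (smul_eq_zero.mp this.symm).resolve_left (by exact_mod_cast hk)

lemma dotProduct_eq_zero_of_sub_eq_zsmul {w p q e : Fin 3 → ℤ} {k : ℤ} (hk : k ≠ 0)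
    (he : q - p = k • e) (h : w ⬝ᵥ p = w ⬝ᵥ q) : w ⬝ᵥ e = 0 := by
  have := map_toR3_eq_zero_of_sub_eq_zsmul (dotProductBilin ℝ ℝ (toR3 w)) hk he
    (by simp [dotProductBilin, h])
  simpa [dotProductBilin] using this

theorem AffineIndependent.linearIndependent_of_forall_eq_one {k V ι : Type*} [Ring k]
    [AddCommGroup V] [Module k V] {p : ι → V} (hp : AffineIndependent k p) (W : V →ₗ[k] k)
    (hW : ∀ i, W (p i) = 1) : LinearIndependent k p := by
  refine linearIndependent_iff'.mpr fun s g hg => hp.eq_zero_of_sum_eq_zero ?_ hg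
  simpa [map_sum, hW] using congrArg W hg

lemma add_smul_sub_add_smul_sub_mem_relIntTriangle {a b c : Fin 3 → ℝ} {s t : ℝ} (hs : 0 < s)
    (ht : 0 < t) (hst : s + t < 1) : b + s • (c - b) + t • (a - b) ∈ relIntTriangle a b c :=
  ⟨t, 1 - s - t, s, ht, by linarith, hs, by ring, by module⟩

lemma IsAnTriangle.latticeLength_eq_one {n : ℕ} {a b c : Fin 3 → ℤ} (ht : IsAnTriangle n a b c)
    (hbc : latticeLength b c = n + 1) : latticeLength a b = 1 := by
  have h := ht.edge_lengths
  simp only [hbc, Multiset.insert_eq_cons, ← Multiset.singleton_add] at h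
  have h' : ({latticeLength a b} + {latticeLength a c} : Multiset ℕ) = {1} + {1} := by
    apply add_left_cancel (a := ({n + 1} : Multiset ℕ))
    rw [add_left_comm, h]
    abel
  have : latticeLength a b ∈ ({1} + {1} : Multiset ℕ) := h' ▸ by simp
  simpa using this

lemma IsAnTriangle.span_toR3_eq_top {n : ℕ} {a b c : Fin 3 → ℤ} (ht : IsAnTriangle n a b c) :
    Submodule.span ℝ (Set.range ![toR3 a, toR3 b, toR3 c]) = ⊤ := by
  obtain ⟨w, ha, hb, hc⟩ := ht.height_one
  have hli := ht.affInd.linearIndependent_of_forall_eq_one (dotProductBilin ℝ ℝ (toR3 w))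
    (by intro i; fin_cases i <;> simp [dotProductBilin, ha, hb, hc])
  exact hli.span_eq_top_of_card_eq_finrank (by simp)

lemma toR3_ne_smul_add_smul {n : ℕ} {a b c e z : Fin 3 → ℤ} {β γ : ℝ}
    (hT : ∀ p : Fin 3 → ℤ, toR3 p ∉ relIntTriangle (toR3 a) (toR3 b) (toR3 c)) (hn : 1 ≤ n)
    (he : c - b = ((n + 1 : ℕ) : ℤ) • e) (hβ : β ∈ Set.Ioo 0 1) (hγ : γ ∈ Set.Ioo 0 1) :
    toR3 z ≠ β • toR3 e + γ • toR3 (a - b) := by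
  intro hz
  obtain ⟨hβ₀, hβ₁⟩ := hβ
  obtain ⟨hγ₀, hγ₁⟩ := hγ
  set m : ℝ := n + 1
  have hm : 1 < m := by simp only [m]; norm_cast; omega
  have hc : toR3 c - toR3 b = m • toR3 e := by
    rw [← toR3_sub, he, toR3_zsmul]; simp [m]
  have hcancel : ∀ x : ℝ, (x / m) • (toR3 c - toR3 b) = x • toR3 e := fun x => by
    rw [hc, smul_smul, div_mul_cancel₀ _ (by positivity)]
  -- The barycentric sums of `b + z` and of its reflection `b + e + (a - b) - z` add up to
  -- `1 + 1 / m < 2`, so one of the two points lies in the open triangle.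
  by_cases h : β / m + γ < 1
  · apply hT (b + z)
    convert add_smul_sub_add_smul_sub_mem_relIntTriangle (div_pos hβ₀ (by positivity)) hγ₀ h
      using 1
    rw [hcancel, toR3_add, hz, toR3_sub]
    abel
  · apply hT (b + e + (a - b) - z)
    have hlt : (1 - β) / m + (1 - γ) < 1 := by
      have : (1 - β) / m < 1 - β / m := by
        rw [div_lt_iff₀ (by positivity), sub_mul, div_mul_cancel₀ _ (by positivity)]
        linarith
      linarith
    convert add_smul_sub_add_smul_sub_mem_relIntTriangle (div_pos (by linarith) (by positivity))
      (by linarith) hlt using 1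
    rw [hcancel]
    simp only [toR3_add, toR3_sub, hz]
    module

lemma eq_zero_of_toR3_eq_smul_add_smul {n : ℕ} {a b c e z : Fin 3 → ℤ} {β γ : ℝ}
    (hT : ∀ p : Fin 3 → ℤ, toR3 p ∉ relIntTriangle (toR3 a) (toR3 b) (toR3 c)) (hn : 1 ≤ n)
    (he : c - b = ((n + 1 : ℕ) : ℤ) • e) (he₁ : coordGcd e = 1) (hab : coordGcd (a - b) = 1)
    (hβ : β ∈ Set.Ico 0 1) (hγ : γ ∈ Set.Ico 0 1) (hz : toR3 z = β • toR3 e + γ • toR3 (a - b)) :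
    β = 0 ∧ γ = 0 := by
  rcases hβ.1.eq_or_lt with rfl | hβ₀
  · exact ⟨rfl, eq_zero_of_toR3_eq_smul hab hγ.1 hγ.2 (by simpa using hz)⟩
  rcases hγ.1.eq_or_lt with rfl | hγ₀
  · exact absurd (eq_zero_of_toR3_eq_smul he₁ hβ.1 hβ.2 (by simpa using hz)) hβ₀.ne'
  exact absurd hz (toR3_ne_smul_add_smul hT hn he ⟨hβ₀, hβ.2⟩ ⟨hγ₀, hγ.2⟩)

lemma IsAnTriangle.exists_eq_smul_add_smul_add_smul {n : ℕ} {a b c e : Fin 3 → ℤ}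
    (ht : IsAnTriangle n a b c) {k : ℤ} (he : c - b = k • e) (x : Fin 3 → ℝ) :
    ∃ α β γ : ℝ, x = α • toR3 b + β • toR3 e + γ • toR3 (a - b) := by
  obtain ⟨r, hr⟩ := (Submodule.mem_span_range_iff_exists_fun ℝ).mp
    (Submodule.eq_top_iff'.mp ht.span_toR3_eq_top x)
  have hc : toR3 c = toR3 b + (k : ℝ) • toR3 e := by
    rw [← toR3_zsmul, ← he]; simp
  refine ⟨r 0 + r 1 + r 2, r 2 * k, r 0, ?_⟩
  rw [← hr]
  simp only [Fin.sum_univ_three, Matrix.cons_val_zero, Matrix.cons_val_one, Matrix.cons_val_two,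
    Matrix.head_cons, Matrix.tail_cons, hc, toR3_sub]
  module

theorem IsAnTriangle.span_eq_top {n : ℕ} {a b c e : Fin 3 → ℤ} (ht : IsAnTriangle n a b c)
    (hn : 1 ≤ n) (hbc : latticeLength b c = n + 1) (he : c - b = ((n + 1 : ℕ) : ℤ) • e) :
    Submodule.span ℤ {b, e, a} = ⊤ := by
  have he₁ : coordGcd e = 1 := by
    have h := coordGcd_zsmul ((n + 1 : ℕ) : ℤ) e
    rwa [← he, ← latticeLength_eq_coordGcd, hbc, Int.natAbs_natCast, eq_comm,
      Nat.mul_eq_left (by omega)] at h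
  have hab : coordGcd (a - b) = 1 := by
    rw [← latticeLength_eq_coordGcd, latticeLength_comm, ht.latticeLength_eq_one hbc]
  obtain ⟨w, hwa, hwb, hwc⟩ := ht.height_one
  have hwe : w ⬝ᵥ e = 0 :=
    dotProduct_eq_zero_of_sub_eq_zsmul (by positivity) he (hwb.trans hwc.symm)
  refine eq_top_iff.mpr fun z _ => Submodule.mem_span_triple.mpr ?_
  obtain ⟨α, β, γ, hz⟩ := ht.exists_eq_smul_add_smul_add_smul he (toR3 z)
  have hα : α = (w ⬝ᵥ z : ℤ) := by
    have := congrArg (toR3 w ⬝ᵥ ·) hz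
    simp only [dotProduct_add, dotProduct_smul, toR3_dotProduct_toR3,
      dotProduct_sub, hwa, hwb, hwe] at this
    simpa using this.symm
  have hfract : toR3 (z - (w ⬝ᵥ z) • b - ⌊β⌋ • e - ⌊γ⌋ • (a - b))
      = Int.fract β • toR3 e + Int.fract γ • toR3 (a - b) := by
    simp only [toR3_sub, toR3_zsmul, hz, hα, Int.fract]
    module
  obtain ⟨hβ, hγ⟩ := eq_zero_of_toR3_eq_smul_add_smul ht.no_interior_point hn he he₁ hab
    ⟨Int.fract_nonneg β, Int.fract_lt_one β⟩ ⟨Int.fract_nonneg γ, Int.fract_lt_one γ⟩ hfract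
  refine ⟨w ⬝ᵥ z - ⌊γ⌋, ⌊β⌋, ⌊γ⌋, toR3_injective ?_⟩
  rw [sub_eq_zero.mp hβ, sub_eq_zero.mp hγ, hα] at hz
  rw [hz]
  simp only [toR3_add, toR3_sub, toR3_zsmul]
  push_cast
  module

lemma eq_neg_one_of_opposite_sides {u e p q : Fin 3 → ℤ} (φ : (Fin 3 → ℝ) →ₗ[ℝ] ℝ)
    (hu : φ (toR3 u) = 0) (he : φ (toR3 e) = 0) (hp : φ (toR3 p) < 0) (hq : 0 < φ (toR3 q))
    {a b c a' b' c' : ℤ} (hq' : a • u + b • e + c • p = q) (hp' : a' • u + b' • e + c' • q = p) :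
    c = -1 := by
  have hφq : φ (toR3 q) = c * φ (toR3 p) := by
    rw [← hq']
    simp only [toR3_add, toR3_zsmul, map_add, map_smul, hu, he, smul_eq_mul]
    ring
  have hφp : φ (toR3 p) = c' * φ (toR3 q) := by
    rw [← hp']
    simp only [toR3_add, toR3_zsmul, map_add, map_smul, hu, he, smul_eq_mul]
    ring
  have hcc' : c * c' = 1 := by
    have : ((c * c' : ℤ) : ℝ) = 1 := by
      apply mul_right_cancel₀ hp.ne
      push_cast
      linear_combination -hφp - c' * hφq
    exact_mod_cast this
  have hc : c < 0 := by
    by_contra! hc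
    have : (0 : ℝ) ≤ c := by exact_mod_cast hc
    nlinarith
  rcases Int.eq_one_or_neg_one_of_mul_eq_one hcc' with h | h <;> omega

/-- For two adjacent `Aₙ`-triangles with supporting linear forms `w₀`, `w₁`
(taking the value `1` on the vertices of `T₀`, resp. `T₁`), one has
`⟨w₁, ρ₀⟩ = ⟨w₀, ρ₁⟩`; in particular almost-flatness is symmetric. -/
theorem adjacent_An_triangles_pairing_symmetric
    (n : ℕ) (hn : 1 ≤ n) (ρ₀ ρ₁ ρu ρv : Fin 3 → ℤ)
    (h : AreAdjacentAnTriangles n ρ₀ ρ₁ ρu ρv)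
    (w₀ w₁ : Fin 3 → ℤ)
    (hw₀ : w₀ ⬝ᵥ ρ₀ = 1 ∧ w₀ ⬝ᵥ ρu = 1 ∧ w₀ ⬝ᵥ ρv = 1)
    (hw₁ : w₁ ⬝ᵥ ρ₁ = 1 ∧ w₁ ⬝ᵥ ρu = 1 ∧ w₁ ⬝ᵥ ρv = 1) :
    w₁ ⬝ᵥ ρ₀ = w₀ ⬝ᵥ ρ₁ := by
  obtain ⟨ht₀, ht₁, huv, φ, hφu, hφv, hφ₀, hφ₁⟩ := h
  obtain ⟨e, he⟩ := exists_eq_coordGcd_zsmul (ρv - ρu)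
  rw [← latticeLength_eq_coordGcd, huv] at he
  have hk : ((n + 1 : ℕ) : ℤ) ≠ 0 := by positivity
  have hw₀e := dotProduct_eq_zero_of_sub_eq_zsmul hk he (hw₀.2.1.trans hw₀.2.2.symm)
  have hw₁e := dotProduct_eq_zero_of_sub_eq_zsmul hk he (hw₁.2.1.trans hw₁.2.2.symm)
  have hφe := map_toR3_eq_zero_of_sub_eq_zsmul φ hk he (hφu.trans hφv.symm)
  obtain ⟨a, b, c, hρ₁⟩ :=
    Submodule.mem_span_triple.mp (Submodule.eq_top_iff'.mp (ht₀.span_eq_top hn huv he) ρ₁)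
  obtain ⟨a', b', c', hρ₀⟩ :=
    Submodule.mem_span_triple.mp (Submodule.eq_top_iff'.mp (ht₁.span_eq_top hn huv he) ρ₀)
  have hc := eq_neg_one_of_opposite_sides φ hφu hφe hφ₀ hφ₁ hρ₁ hρ₀
  have h₀ := congrArg (w₀ ⬝ᵥ ·) hρ₁
  have h₁ := congrArg (w₁ ⬝ᵥ ·) hρ₁
  simp only [dotProduct_add, dotProduct_smul, hc, hw₀e, hw₁e, hw₀.1, hw₀.2.1, hw₁.1, hw₁.2.1,
    smul_eq_mul] at h₀ h₁
  linarith
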